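/- Let T be a finite connected multigraph with signed edges and e a positive edge contained in a cycle of all-positive edges. If T' is obtained by flipping e to negative, then the maximum of η over spanning trees is unchanged: max_{t ⊆ T'} η'(t) = max_{t ⊆ T} η(t). -/

import Mathlib

/-- A finite multigraph: vertex type `V`, edge type `E`, each edge has an
unordered pair of endpoints (loops and parallel edges are allowed). -/
structure Multigraph where
  V : Type
  E : Type
  fV : Fintype V
  fE : Fintype E
  dV : DecidableEq V
  dE : DecidableEq E
  ends : E → Sym2 V

attribute [instance] Multigraph.fV Multigraph.fE Multigraph.dV Multigraph.dE

namespace Multigraph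

variable (G : Multigraph)

/-- `u` and `v` are joined by an edge of the edge set `S`. -/
def adjOn (S : Finset G.E) (u v : G.V) : Prop :=
  ∃ e ∈ S, G.ends e = s(u, v)

/-- `u` and `v` are joined by a walk using only edges of `S`. -/
def reach (S : Finset G.E) (u v : G.V) : Prop :=
  Relation.ReflTransGen (G.adjOn S) u v

/-- The spanning subgraph with edge set `S` is connected. -/
def connectedOn (S : Finset G.E) : Prop := ∀ u v : G.V, G.reach S u v

/-- The multigraph is connected. -/
def Connected : Prop := Nonempty G.V ∧ G.connectedOn Finset.univ

/-- The subgraph with edge set `S` contains no cycle: no edge of `S` has its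
endpoints joined within `S` minus that edge. -/
def acyclicOn (S : Finset G.E) : Prop :=
  ∀ e ∈ S, ∀ u v : G.V, G.ends e = s(u, v) → ¬ G.reach (S.erase e) u v

/-- `S` is the edge set of a spanning tree: connected and acyclic spanning
subgraph. -/
def IsSpanningTree (S : Finset G.E) : Prop :=
  G.connectedOn S ∧ G.acyclicOn S

/-- the edge `e` lies in a cycle all of whose edges belong to `S`. -/
def InCycleOn (S : Finset G.E) (e : G.E) : Prop :=
  e ∈ S ∧ ∃ u v : G.V, G.ends e = s(u, v) ∧ G.reach (S.erase e) u v

/-- the positive edges, for a sign labelling (`true` = positive). -/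
def posEdges (sign : G.E → Bool) : Finset G.E :=
  Finset.univ.filter fun e => sign e = true

/-- the negative edges. -/
def negEdges (sign : G.E → Bool) : Finset G.E :=
  Finset.univ.filter fun e => sign e = false

/-- `e` lies in a cycle consisting entirely of positive edges. -/
def InPositiveCycle (sign : G.E → Bool) (e : G.E) : Prop :=
  G.InCycleOn (G.posEdges sign) e

/-- `e` lies in a cycle consisting entirely of negative edges. -/
def InNegativeCycle (sign : G.E → Bool) (e : G.E) : Prop :=
  G.InCycleOn (G.negEdges sign) e

/-- `η(t)` = (# positive edges of `t`) − (# negative edges of `t`). -/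
def eta (sign : G.E → Bool) (t : Finset G.E) : ℤ :=
  ((t.filter fun e => sign e = true).card : ℤ) -
    (t.filter fun e => sign e = false).card

/-- `S` contains a cycle. -/
def Dependent (S : Finset G.E) : Prop := ¬ G.acyclicOn S

/-- `C` is (the edge set of) a cycle: a minimal dependent set. -/
def IsCircuit (C : Finset G.E) : Prop :=
  G.Dependent C ∧ ∀ C' ⊂ C, G.acyclicOn C'

/-- the set of values of `η` on spanning trees. -/
def etaSet (sign : G.E → Bool) : Set ℤ :=
  {x | ∃ t : Finset G.E, G.IsSpanningTree t ∧ G.eta sign t = x}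

end Multigraph

/-!
Flipping `e` to negative lowers `η` by two on the spanning trees through `e` and leaves it
unchanged on the others, so the maximum cannot increase. Conversely, if an `η`-maximal tree `t`
contains `e`, then the positive cycle through `e` must leave the component of one endpoint of `e`
in `t - e` along some positive edge `f ∉ t`; the exchanged tree `t - e + f` has the same `η`,
avoids `e`, and so keeps its value after the flip.
-/

namespace Multigraph

variable {G : Multigraph}

section Reach

variable {S T : Finset G.E} {e : G.E} {u v x y : G.V}

lemma reach_symm (h : G.reach S u v) : G.reach S v u := by
  refine (@Relation.ReflTransGen.stdSymm _ _ ⟨?_⟩).symm _ _ h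
  rintro x y ⟨f, hf, hends⟩
  exact ⟨f, hf, by rw [hends, Sym2.eq_swap]⟩

lemma reach_mono (hST : S ⊆ T) (h : G.reach S u v) : G.reach T u v := by
  refine Relation.ReflTransGen.mono ?_ _ _ h
  rintro x y ⟨f, hf, hends⟩
  exact ⟨f, hST hf, hends⟩

lemma reach_of_ends (hS : e ∈ S) (hends : G.ends e = s(u, v)) : G.reach S u v :=
  Relation.ReflTransGen.single ⟨e, hS, hends⟩

lemma connectedOn.reach_erase_or (hS : G.connectedOn S) (hends : G.ends e = s(u, v)) (x : G.V) :
    G.reach (S.erase e) u x ∨ G.reach (S.erase e) v x := by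
  induction hS u x with
  | refl => exact Or.inl .refl
  | tail _ hadj ih =>
    obtain ⟨g, hg, hgends⟩ := hadj
    by_cases hge : g = e
    · subst hge
      rcases Sym2.eq_iff.mp (hends ▸ hgends) with ⟨rfl, rfl⟩ | ⟨rfl, rfl⟩
      · exact Or.inr .refl
      · exact Or.inl .refl
    · have hadj' : G.adjOn (S.erase e) _ _ := ⟨g, Finset.mem_erase.mpr ⟨hge, hg⟩, hgends⟩
      exact ih.imp (·.tail hadj') (·.tail hadj')

lemma exists_crossing_of_reach {P : G.V → Prop} (h : G.reach S u v) (hu : P u) (hv : ¬ P v) :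
    ∃ f ∈ S, ∃ a b : G.V, G.ends f = s(a, b) ∧ P a ∧ ¬ P b := by
  induction h with
  | refl => exact absurd hu hv
  | @tail c _ _ hadj ih =>
    by_cases hc : P c
    · obtain ⟨f, hf, hends⟩ := hadj
      exact ⟨f, hf, c, _, hends, hc, hv⟩
    · exact ih hc

/-- A walk using the new edge `f` is cut at its last crossing of `f`. -/
lemma reach_insert {f : G.E} {a b : G.V} (hends : G.ends f = s(a, b))
    (h : G.reach (insert f S) x y) :
    G.reach S x y ∨ (G.reach S x a ∧ G.reach S b y) ∨ (G.reach S x b ∧ G.reach S a y) := by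
  induction h with
  | refl => exact Or.inl .refl
  | @tail c y _ hadj ih =>
    obtain ⟨g, hg, hgends⟩ := hadj
    rcases Finset.mem_insert.mp hg with rfl | hgS
    · rcases Sym2.eq_iff.mp (hends ▸ hgends) with ⟨rfl, rfl⟩ | ⟨rfl, rfl⟩
      · rcases ih with h1 | ⟨h1, -⟩ | ⟨h1, -⟩
        · exact Or.inr (Or.inl ⟨h1, .refl⟩)
        · exact Or.inr (Or.inl ⟨h1, .refl⟩)
        · exact Or.inl h1
      · rcases ih with h1 | ⟨h1, -⟩ | ⟨h1, -⟩
        · exact Or.inr (Or.inr ⟨h1, .refl⟩)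
        · exact Or.inl h1
        · exact Or.inr (Or.inr ⟨h1, .refl⟩)
    · have hadj' : G.adjOn S c y := ⟨g, hgS, hgends⟩
      exact ih.imp (·.tail hadj') (Or.imp (.imp_right (·.tail hadj')) (.imp_right (·.tail hadj')))

end Reach

section Acyclic

variable {S T : Finset G.E}

lemma acyclicOn.mono (hT : G.acyclicOn T) (hST : S ⊆ T) : G.acyclicOn S :=
  fun e he u v hends h => hT e (hST he) u v hends (reach_mono (Finset.erase_subset_erase e hST) h)

lemma acyclicOn.insert (hS : G.acyclicOn S) {f : G.E} {a b : G.V} (hends : G.ends f = s(a, b))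
    (hab : ¬ G.reach S a b) : G.acyclicOn (insert f S) := by
  have hfS : f ∉ S := fun hf => hab (reach_of_ends hf hends)
  intro g hg x y hgends hxy
  rcases Finset.mem_insert.mp hg with rfl | hgS
  · rw [Finset.erase_insert hfS] at hxy
    rcases Sym2.eq_iff.mp (hends ▸ hgends) with ⟨rfl, rfl⟩ | ⟨rfl, rfl⟩
    · exact hab hxy
    · exact hab (reach_symm hxy)
  · have hgf : g ≠ f := fun h => hfS (h ▸ hgS)
    rw [Finset.erase_insert_of_ne hgf.symm] at hxy
    have hsub : S.erase g ⊆ S := Finset.erase_subset g S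
    have hxyS : G.reach S x y := reach_of_ends hgS hgends
    rcases reach_insert hends hxy with h | ⟨hxa, hby⟩ | ⟨hxb, hay⟩
    · exact hS g hgS x y hgends h
    · exact hab (((reach_symm (reach_mono hsub hxa)).trans hxyS).trans
        (reach_symm (reach_mono hsub hby)))
    · exact hab (((reach_mono hsub hay).trans (reach_symm hxyS)).trans (reach_mono hsub hxb))

end Acyclic

section Exchange

variable {t S : Finset G.E} {e f : G.E} {u v a b : G.V}

/-- Basis exchange: `f` reconnects the two components of `t - e`. -/
lemma IsSpanningTree.exchange (ht : G.IsSpanningTree t) (hends : G.ends e = s(u, v))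
    (hfends : G.ends f = s(a, b)) (ha : G.reach (t.erase e) u a)
    (hb : ¬ G.reach (t.erase e) u b) : G.IsSpanningTree (insert f (t.erase e)) := by
  have hsub : t.erase e ⊆ insert f (t.erase e) := Finset.subset_insert _ _
  have hvb : G.reach (t.erase e) v b := (ht.1.reach_erase_or hends b).resolve_left hb
  have huv : G.reach (insert f (t.erase e)) u v :=
    ((reach_mono hsub ha).trans (reach_of_ends (Finset.mem_insert_self _ _) hfends)).trans
      (reach_mono hsub (reach_symm hvb))
  have hu : ∀ x, G.reach (insert f (t.erase e)) u x := fun x =>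
    (ht.1.reach_erase_or hends x).elim (reach_mono hsub ·) (huv.trans <| reach_mono hsub ·)
  refine ⟨fun x y => (reach_symm (hu x)).trans (hu y), ?_⟩
  exact (ht.2.mono (Finset.erase_subset e t)).insert hfends fun hab => hb (ha.trans hab)

lemma IsSpanningTree.exists_exchange_of_inCycleOn (ht : G.IsSpanningTree t) (het : e ∈ t)
    (hc : G.InCycleOn S e) : ∃ f ∈ S, f ∉ t ∧ G.IsSpanningTree (insert f (t.erase e)) := by
  obtain ⟨-, u, v, hends, huv⟩ := hc
  have hnot : ¬ G.reach (t.erase e) u v := ht.2 e het u v hends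
  obtain ⟨f, hfS, a, b, hfends, ha, hb⟩ :=
    exists_crossing_of_reach (P := G.reach (t.erase e) u) huv .refl hnot
  have hft : f ∉ t := fun hf =>
    hb (ha.trans (reach_of_ends (Finset.mem_erase.mpr ⟨(Finset.mem_erase.mp hfS).1, hf⟩) hfends))
  exact ⟨f, Finset.mem_of_mem_erase hfS, hft, ht.exchange hends hfends ha hb⟩

end Exchange

section Eta

variable {sign : G.E → Bool} {t : Finset G.E} {e f : G.E}

lemma eta_eq_sum (sign : G.E → Bool) (t : Finset G.E) :
    G.eta sign t = ∑ x ∈ t, if sign x then 1 else -1 := by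
  rw [Finset.sum_ite, Finset.sum_const, Finset.sum_const, eta]
  simp [sub_eq_add_neg]

lemma eta_insert_erase (hfe : sign f = sign e) (het : e ∈ t) (hft : f ∉ t) :
    G.eta sign (insert f (t.erase e)) = G.eta sign t := by
  rw [eta_eq_sum, eta_eq_sum, Finset.sum_insert (fun h => hft (Finset.mem_of_mem_erase h)), hfe]
  exact Finset.add_sum_erase t (fun x => if sign x then 1 else -1) het

lemma eta_update_of_notMem (het : e ∉ t) (b : Bool) :
    G.eta (Function.update sign e b) t = G.eta sign t := by
  rw [eta_eq_sum, eta_eq_sum]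
  refine Finset.sum_congr rfl fun x hx => ?_
  rw [Function.update_of_ne (ne_of_mem_of_not_mem hx het)]

lemma eta_update_false_le (sign : G.E → Bool) (e : G.E) (t : Finset G.E) :
    G.eta (Function.update sign e false) t ≤ G.eta sign t := by
  rw [eta_eq_sum, eta_eq_sum]
  refine Finset.sum_le_sum fun x _ => ?_
  rcases eq_or_ne x e with rfl | hxe
  · cases sign x <;> simp
  · rw [Function.update_of_ne hxe]

lemma IsSpanningTree.exists_notMem_eta_eq {S : Finset G.E} (ht : G.IsSpanningTree t)
    (hc : G.InCycleOn S e) (hS : ∀ f ∈ S, sign f = sign e) :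
    ∃ t', G.IsSpanningTree t' ∧ e ∉ t' ∧ G.eta sign t' = G.eta sign t := by
  by_cases het : e ∈ t
  · obtain ⟨f, hfS, hft, ht'⟩ := ht.exists_exchange_of_inCycleOn het hc
    refine ⟨_, ht', ?_, eta_insert_erase (hS f hfS) het hft⟩
    simp [ne_of_mem_of_not_mem het hft]
  · exact ⟨t, ht, het, rfl⟩

end Eta

end Multigraph

theorem stmt6_general (G : Multigraph) (sign : G.E → Bool)
    (e : G.E) (hc : G.InPositiveCycle sign e)
    (M M' : ℤ)
    (hM : IsGreatest (G.etaSet sign) M)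
    (hM' : IsGreatest (G.etaSet (Function.update sign e false)) M') :
    M' = M := by
  obtain ⟨t, ht, rfl⟩ := hM.1
  obtain ⟨t', ht', rfl⟩ := hM'.1
  have hpos : ∀ f ∈ G.posEdges sign, sign f = sign e := fun f hf => by
    rw [(Finset.mem_filter.mp hf).2, (Finset.mem_filter.mp hc.1).2]
  obtain ⟨s, hs, hes, hη⟩ := ht.exists_notMem_eta_eq hc hpos
  refine le_antisymm ((G.eta_update_false_le sign e t').trans (hM.2 ⟨t', ht', rfl⟩)) ?_
  rw [← hη, ← G.eta_update_of_notMem hes false]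
  exact hM'.2 ⟨s, hs, rfl⟩

/-- flipping to negative a positive edge that lies in an
all-positive cycle leaves the maximum of `η` over spanning trees unchanged. -/
theorem stmt6 (G : Multigraph) (hconn : G.Connected) (sign : G.E → Bool)
    (e : G.E) (he : sign e = true) (hc : G.InPositiveCycle sign e)
    (M M' : ℤ)
    (hM : IsGreatest (G.etaSet sign) M)
    (hM' : IsGreatest (G.etaSet (Function.update sign e false)) M') :
    M' = M :=
  stmt6_general G sign e hc M M' hM hM'
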